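/- Let z, z₁, …, zₙ ∈ ℂ with |zᵢ| ≤ r < |z| for all i, let q₁, …, qₙ ∈ ℝ, set Q = Σᵢ |qᵢ|, c = |z|/r, and define the potential φ(z) = Σᵢ qᵢ log(z − zᵢ) (principal branch, valid since |zᵢ| < |z|). Then for every p ≥ 1, |φ(z) − q·log(z) + Σ_{k=1}^{p} (Σᵢ qᵢ zᵢᵏ/k) / zᵏ| ≤ (Q/(p+1)) · (1/(c−1)) · (1/c)^p, where q = Σᵢ qᵢ. -/

import Mathlib

/-!
Since `|zᵢ| ≤ r < |z|`, each term factors as `log (z - zᵢ) = log z + log (1 - zᵢ/z)`, so after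
the monopole `q log z` is removed the residual is `Σᵢ qᵢ (log (1 - wᵢ) + Σ_{k ≤ p} wᵢᵏ/k)` with
`wᵢ = zᵢ/z`, i.e. a weighted sum of tails of the Taylor series of `log (1 - w)`. With
`|wᵢ| ≤ 1/c`, each tail is at most `Σ_{k > p} c⁻ᵏ/k ≤ c⁻⁽ᵖ⁺¹⁾/((p+1)(1 - 1/c))`.
-/

open Complex Finset

lemma logTaylor_succ_neg (n : ℕ) (w : ℂ) :
    logTaylor (n + 1) (-w) = -∑ k ∈ Icc 1 n, w ^ k / k := by
  have hterm (k : ℕ) (d : ℂ) : (-1) ^ (k + 1) * (-w) ^ k / d = -(w ^ k / d) := by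
    rw [pow_succ', mul_assoc, ← mul_pow]
    simp [neg_div]
  rw [logTaylor, sum_range_succ', ← Ico_add_one_right_eq_Icc, sum_Ico_eq_sum_range]
  simp [hterm, add_comm 1]

lemma norm_log_one_sub_add_sum_le {w : ℂ} (hw : ‖w‖ < 1) (n : ℕ) :
    ‖log (1 - w) + ∑ k ∈ Icc 1 n, w ^ k / k‖ ≤ ‖w‖ ^ (n + 1) * (1 - ‖w‖)⁻¹ / (n + 1) := by
  have h := norm_log_sub_logTaylor_le n (z := -w) (by rwa [norm_neg])
  rwa [logTaylor_succ_neg, sub_neg_eq_add, ← sub_eq_add_neg, norm_neg] at h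

lemma norm_log_one_sub_add_sum_le_of_norm_le_inv {w : ℂ} {c : ℝ} (hc : 1 < c)
    (hw : ‖w‖ ≤ 1 / c) (n : ℕ) :
    ‖log (1 - w) + ∑ k ∈ Icc 1 n, w ^ k / k‖ ≤ 1 / (n + 1) * (1 / (c - 1)) * (1 / c) ^ n := by
  have hc0 : 0 < c := zero_lt_one.trans hc
  have hc1 : 1 / c < 1 := (div_lt_one hc0).2 hc
  have hw1 : ‖w‖ < 1 := hw.trans_lt hc1
  calc ‖log (1 - w) + ∑ k ∈ Icc 1 n, w ^ k / k‖
      ≤ ‖w‖ ^ (n + 1) * (1 - ‖w‖)⁻¹ / (n + 1) := norm_log_one_sub_add_sum_le hw1 n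
    _ ≤ (1 / c) ^ (n + 1) * (1 - 1 / c)⁻¹ / (n + 1) := by gcongr
    _ = 1 / (n + 1) * (1 / (c - 1)) * (1 / c) ^ n := by
        rw [show 1 - 1 / c = (c - 1) / c by field_simp, pow_succ]
        field_simp [(sub_pos.2 hc).ne']

lemma multipole_residual_eq {ι : Type*} (s : Finset ι) (q x : ι → ℂ) (z : ℂ)
    (hlog : ∀ i ∈ s, log (z - x i) = log z + log (1 - x i / z)) (p : ℕ) :
    (∑ i ∈ s, q i * log (z - x i)) - (∑ i ∈ s, q i) * log z
        + ∑ k ∈ Icc 1 p, (∑ i ∈ s, q i * x i ^ k / k) / z ^ k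
      = ∑ i ∈ s, q i * (log (1 - x i / z) + ∑ k ∈ Icc 1 p, (x i / z) ^ k / k) := by
  have hswap : ∑ k ∈ Icc 1 p, (∑ i ∈ s, q i * x i ^ k / k) / z ^ k
      = ∑ i ∈ s, q i * ∑ k ∈ Icc 1 p, (x i / z) ^ k / k := by
    simp_rw [sum_div, mul_sum, div_pow]
    rw [sum_comm]
    exact sum_congr rfl fun i _ => sum_congr rfl fun k _ => by ring
  rw [hswap, sum_mul, ← sum_sub_distrib, ← sum_add_distrib]
  refine sum_congr rfl fun i hi => ?_
  rw [hlog i hi]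
  ring

theorem multipole_expansion_bound_general (n : ℕ) (z : ℂ) (zs : Fin n → ℂ) (qs : Fin n → ℝ)
    (r : ℝ) (hr0 : 0 < r) (hr : ∀ i, ‖zs i‖ ≤ r) (hz : r < ‖z‖)
    (hbranch : ∀ i, Complex.log (z - zs i) = Complex.log z + Complex.log (1 - zs i / z))
    (p : ℕ) :
    ‖((∑ i, (qs i : ℂ) * Complex.log (z - zs i))
        - (∑ i, (qs i : ℂ)) * Complex.log z
        + ∑ k ∈ Finset.Icc 1 p, (∑ i, (qs i : ℂ) * (zs i) ^ k / (k : ℂ)) / z ^ k)‖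
      ≤ ((∑ i, |qs i|) / (p + 1)) * (1 / (‖z‖ / r - 1))
          * (1 / (‖z‖ / r)) ^ p := by
  have hc : 1 < ‖z‖ / r := (one_lt_div hr0).2 hz
  have hw (i : Fin n) : ‖zs i / z‖ ≤ 1 / (‖z‖ / r) := by
    rw [norm_div, one_div_div]
    exact div_le_div_of_nonneg_right (hr i) (norm_nonneg z)
  rw [multipole_residual_eq _ _ _ _ (fun i _ => hbranch i)]
  calc _ ≤ ∑ i, |qs i| * (1 / (p + 1) * (1 / (‖z‖ / r - 1)) * (1 / (‖z‖ / r)) ^ p) := by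
        refine norm_sum_le_of_le _ fun i _ => ?_
        rw [norm_mul, norm_real, Real.norm_eq_abs]
        exact mul_le_mul_of_nonneg_left
          (norm_log_one_sub_add_sum_le_of_norm_le_inv hc (hw i) p) (abs_nonneg _)
    _ = _ := by rw [← sum_mul]; ring

/-- Multipole expansion error bound (Greengard–Rokhlin). -/
theorem multipole_expansion_bound (n : ℕ) (z : ℂ) (zs : Fin n → ℂ) (qs : Fin n → ℝ)
    (r : ℝ) (hr0 : 0 < r) (hr : ∀ i, ‖zs i‖ ≤ r) (hz : r < ‖z‖)
    (hbranch : ∀ i, Complex.log (z - zs i) = Complex.log z + Complex.log (1 - zs i / z))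
    (p : ℕ) (hp : 1 ≤ p) :
    ‖((∑ i, (qs i : ℂ) * Complex.log (z - zs i))
        - (∑ i, (qs i : ℂ)) * Complex.log z
        + ∑ k ∈ Finset.Icc 1 p, (∑ i, (qs i : ℂ) * (zs i) ^ k / (k : ℂ)) / z ^ k)‖
      ≤ ((∑ i, |qs i|) / (p + 1)) * (1 / (‖z‖ / r - 1))
          * (1 / (‖z‖ / r)) ^ p :=
  multipole_expansion_bound_general n z zs qs r hr0 hr hz hbranch p
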